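/- arXiv:1205.0392 — 4 statements merged into one kernel-verified Lean document; each statement's English description precedes it below -/
import Mathlib

section
/- For the binary Rudin–Shapiro sequence w : ℤ → {±1} (defined by w(−1)=−1, w(0)=1, w(4n+ℓ)=w(n) for ℓ∈{0,1}, w(4n+ℓ)=(−1)^{n+ℓ}w(n) for ℓ∈{2,3}), and for every fixed m ≠ 0, the averages (1/(2N+1)) ∑_{n=−N}^{N} w(n)·w(n+m) converge to 0 as N → ∞. -/
/-!
With `u k = w (2 * k)` the recursion becomes the symmetric system `w (2k) = u k`,
`w (2k+1) = (-1)^k u k` and the same with `w` and `u` exchanged. Summing the lag-`m` products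
`w n * w (n + m)`, and their alternating versions `(-1)^n w n * w (n + m)`, over the pairs
`{2k, 2k+1}` expresses them through lag-`⌊m/2⌋` and lag-`⌈m/2⌉` products of `u`, summed over an
interval of half the length. Strong induction on `m` then shows that all these interval sums are
`o(length)`, uniformly in the interval. The induction bottoms out at lag `0`, where the
alternating sums are sums of `(-1)^n`, and at the alternating lag-`1` sums, which halve into
themselves plus a bounded error and hence grow only logarithmically.
-/

open Filter Finset

namespace RudinShapiro

theorem sum_Ico_add_sum_Ico {α M : Type*} [LinearOrder α] [LocallyFiniteOrder α]
    [AddCommMonoid M] (f : α → M) {a b c : α} (hab : a ≤ b) (hbc : b ≤ c) :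
    ∑ x ∈ Ico a b, f x + ∑ x ∈ Ico b c, f x = ∑ x ∈ Ico a c, f x := by
  rw [← sum_union (Ico_disjoint_Ico_consecutive a b c), Ico_union_Ico_eq_Ico hab hbc]

theorem abs_sum_Ico_le {h : ℤ → ℝ} (hb : ∀ n, |h n| ≤ 1) {a b : ℤ} (hab : a ≤ b) :
    |∑ n ∈ Ico a b, h n| ≤ b - a :=
  calc |∑ n ∈ Ico a b, h n| ≤ ∑ n ∈ Ico a b, |h n| := abs_sum_le_sum_abs _ _
    _ ≤ ∑ n ∈ Ico a b, (1 : ℝ) := sum_le_sum fun n _ => hb n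
    _ = b - a := by
      rw [sum_const, nsmul_one, ← Int.cast_natCast, Int.card_Ico_of_le a b hab, Int.cast_sub]

theorem sum_Ico_neg_one_zpow {a b : ℤ} (hab : a ≤ b) :
    ∑ n ∈ Ico a b, (-1 : ℝ) ^ n = ((-1) ^ a - (-1) ^ b) / 2 := by
  induction b, hab using Int.leInduction with
  | base => simp
  | succ b hab ih =>
    rw [← sum_Ico_add_eq_sum_Ico_add_one hab, ih, zpow_add_one₀ (by norm_num)]
    ring

theorem abs_sum_Ico_neg_one_zpow_le (a b : ℤ) : |∑ n ∈ Ico a b, (-1 : ℝ) ^ n| ≤ 1 := by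
  rcases le_or_gt a b with hab | hba
  · rw [sum_Ico_neg_one_zpow hab, abs_div, abs_two, div_le_one two_pos]
    refine (abs_sub _ _).trans ?_
    norm_num
  · simp [Ico_eq_empty_of_le hba.le]

def foldPairs (h : ℤ → ℝ) (n : ℤ) : ℝ := h (2 * n) + h (2 * n + 1)

theorem sum_Ico_two_mul (h : ℤ → ℝ) {a b : ℤ} (hab : a ≤ b) :
    ∑ n ∈ Ico (2 * a) (2 * b), h n = ∑ n ∈ Ico a b, foldPairs h n := by
  induction b, hab using Int.leInduction with
  | base => simp
  | succ b hab ih =>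
    rw [← sum_Ico_add_eq_sum_Ico_add_one hab, ← ih, foldPairs,
      show 2 * (b + 1) = 2 * b + 1 + 1 by ring, ← sum_Ico_add_eq_sum_Ico_add_one (by omega),
      ← sum_Ico_add_eq_sum_Ico_add_one (by omega), add_assoc]

theorem exists_abs_sum_Ico_sub_sum_foldPairs_le {h : ℤ → ℝ} (hb : ∀ n, |h n| ≤ 1) {a b : ℤ}
    (hab : a ≤ b) : ∃ α β, α ≤ β ∧ 2 * (β - α) ≤ b - a ∧
      |∑ n ∈ Ico a b, h n - ∑ n ∈ Ico α β, foldPairs h n| ≤ 2 := by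
  rcases le_or_gt (b - a) 1 with hshort | hlong
  · refine ⟨0, 0, le_rfl, by omega, ?_⟩
    rw [Ico_self, sum_empty, sub_zero]
    refine (abs_sum_Ico_le hb hab).trans ?_
    have : ((b - a : ℤ) : ℝ) ≤ 1 := by exact_mod_cast hshort
    push_cast at this
    linarith
  · refine ⟨(a + 1) / 2, b / 2, by omega, by omega, ?_⟩
    have ha : a ≤ 2 * ((a + 1) / 2) := by omega
    have hb' : 2 * (b / 2) ≤ b := by omega
    rw [← sum_Ico_two_mul h (by omega), ← sum_Ico_add_sum_Ico h ha (by omega),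
      ← sum_Ico_add_sum_Ico h (by omega) hb', add_sub_assoc, add_sub_cancel_left]
    have hl := abs_sum_Ico_le hb ha
    have hr := abs_sum_Ico_le hb hb'
    have hl' : ((2 * ((a + 1) / 2) - a : ℤ) : ℝ) ≤ 1 := by exact_mod_cast (by omega)
    have hr' : ((b - 2 * (b / 2) : ℤ) : ℝ) ≤ 1 := by exact_mod_cast (by omega)
    push_cast at hl hr hl' hr'
    linarith [abs_add_le (∑ n ∈ Ico a (2 * ((a + 1) / 2)), h n) (∑ n ∈ Ico (2 * (b / 2)) b, h n)]

def SublinearSums (h : ℤ → ℝ) : Prop :=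
  ∀ ε > 0, ∃ C, ∀ a b : ℤ, a ≤ b → |∑ n ∈ Ico a b, h n| ≤ C + ε * (b - a)

namespace SublinearSums

variable {h k : ℤ → ℝ}

theorem of_abs_sum_le (K : ℝ) (hK : ∀ a b, |∑ n ∈ Ico a b, h n| ≤ K) : SublinearSums h :=
  fun _ hε => ⟨K, fun a b hab => (hK a b).trans <|
    le_add_of_nonneg_right <| mul_nonneg hε.le <| sub_nonneg.2 <| Int.cast_le.2 hab⟩

theorem add (hh : SublinearSums h) (hk : SublinearSums k) :
    SublinearSums fun n => h n + k n := by
  intro ε hε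
  obtain ⟨C, hC⟩ := hh (ε / 2) (half_pos hε)
  obtain ⟨D, hD⟩ := hk (ε / 2) (half_pos hε)
  refine ⟨C + D, fun a b hab => ?_⟩
  rw [sum_add_distrib]
  linarith [abs_add_le (∑ n ∈ Ico a b, h n) (∑ n ∈ Ico a b, k n), hC a b hab, hD a b hab]

theorem const_mul (hh : SublinearSums h) (c : ℝ) : SublinearSums fun n => c * h n := by
  intro ε hε
  have hc : 0 < |c| + 1 := by positivity
  obtain ⟨C, hC⟩ := hh (ε / (|c| + 1)) (div_pos hε hc)
  refine ⟨|c| * C, fun a b hab => ?_⟩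
  have hba : (0 : ℝ) ≤ b - a := sub_nonneg.2 (Int.cast_le.2 hab)
  have hε' : |c| * (ε / (|c| + 1)) ≤ ε := by
    rw [mul_div_assoc', div_le_iff₀ hc]
    nlinarith [abs_nonneg c]
  rw [← mul_sum, abs_mul]
  calc |c| * |∑ n ∈ Ico a b, h n| ≤ |c| * (C + ε / (|c| + 1) * (b - a)) :=
        mul_le_mul_of_nonneg_left (hC a b hab) (abs_nonneg c)
    _ ≤ |c| * C + ε * (b - a) := by
        rw [mul_add, ← mul_assoc]
        gcongr

theorem sub (hh : SublinearSums h) (hk : SublinearSums k) :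
    SublinearSums fun n => h n - k n := by
  simpa [sub_eq_add_neg] using hh.add (hk.const_mul (-1))

theorem comp_add_const (hh : SublinearSums h) (c : ℤ) : SublinearSums fun n => h (n + c) := by
  intro ε hε
  obtain ⟨C, hC⟩ := hh ε hε
  refine ⟨C, fun a b hab => ?_⟩
  rw [sum_Ico_add' h a b c]
  simpa using hC (a + c) (b + c) (by omega)

theorem of_foldPairs (hb : ∀ n, |h n| ≤ 1) (hfold : SublinearSums (foldPairs h)) :
    SublinearSums h := by
  intro ε hε
  obtain ⟨C, hC⟩ := hfold ε hε
  refine ⟨C + 2, fun a b hab => ?_⟩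
  obtain ⟨α, β, hαβ, hlen, htrim⟩ := exists_abs_sum_Ico_sub_sum_foldPairs_le hb hab
  have hlen' : (β : ℝ) - α ≤ b - a := by
    have : ((2 * (β - α) : ℤ) : ℝ) ≤ ((b - a : ℤ) : ℝ) := Int.cast_le.2 hlen
    push_cast at this
    linarith [(sub_nonneg.2 (Int.cast_le.2 hαβ) : (0 : ℝ) ≤ β - α)]
  have := hC α β hαβ
  have := abs_sub_abs_le_abs_sub (∑ n ∈ Ico a b, h n) (∑ n ∈ Ico α β, foldPairs h n)
  nlinarith [mul_le_mul_of_nonneg_left hlen' hε.le]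

theorem tendsto_sum_Icc_div (hh : SublinearSums h) :
    Tendsto (fun N : ℕ => (∑ n ∈ Icc (-(N : ℤ)) N, h n) / (2 * N + 1)) atTop (nhds 0) := by
  rw [Metric.tendsto_atTop]
  intro ε hε
  obtain ⟨C, hC⟩ := hh (ε / 2) (half_pos hε)
  refine ⟨⌈C / ε⌉₊, fun N hN => ?_⟩
  have hpos : (0 : ℝ) < 2 * N + 1 := by positivity
  have hCN : C ≤ ε * N := by
    rw [← div_le_iff₀' hε]
    exact (Nat.le_ceil _).trans (Nat.cast_le.2 hN)
  have hsum := hC (-N) (N + 1) (by omega)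
  rw [Ico_add_one_right_eq_Icc] at hsum
  push_cast at hsum
  rw [Real.dist_eq, sub_zero, abs_div, abs_of_pos hpos, div_lt_iff₀ hpos]
  linarith

end SublinearSums

theorem sublinearSums_of_abs_sum_foldPairs_le {P : (ℤ → ℝ) → Prop} {K : ℝ}
    (hb : ∀ h, P h → ∀ n, |h n| ≤ 1)
    (hfold : ∀ h, P h → ∃ h', P h' ∧
      ∀ a b, a ≤ b → |∑ n ∈ Ico a b, foldPairs h n| ≤ K + |∑ n ∈ Ico a b, h' n|)
    {h : ℤ → ℝ} (hh : P h) : SublinearSums h := by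
  intro ε hε
  have hK : 0 ≤ K := by
    obtain ⟨h', -, hh'⟩ := hfold h hh
    simpa using hh' 0 0 le_rfl
  -- Beyond length `T` one halving step gains `ε (b - a) / 2 ≥ K + 2`, which pays for the
  -- trimming error `2` and the error `K` of the halving itself.
  set T := 2 * (K + 2) / ε
  have hT : 0 ≤ T := by positivity
  suffices ∀ L : ℕ, ∀ h, P h → ∀ a b : ℤ, a ≤ b → b - a ≤ L →
      |∑ n ∈ Ico a b, h n| ≤ T + ε * (b - a) from
    ⟨T, fun a b hab => this (b - a).toNat h hh a b hab (by omega)⟩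
  have hshort : ∀ h, P h → ∀ a b : ℤ, a ≤ b → (b : ℝ) - a ≤ T →
      |∑ n ∈ Ico a b, h n| ≤ T + ε * (b - a) := fun h hh a b hab hlen => by
    have := abs_sum_Ico_le (hb h hh) hab
    nlinarith [mul_nonneg hε.le (sub_nonneg.2 (Int.cast_le.2 hab) : (0 : ℝ) ≤ b - a)]
  intro L
  induction L with
  | zero => exact fun h hh a b hab hL => hshort h hh a b hab (by
      rw [← Int.cast_sub]; exact (Int.cast_nonpos.2 (by omega)).trans hT)
  | succ L ih =>
    intro h hh a b hab hL
    rcases le_or_gt ((b : ℝ) - a) T with hlen | hlen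
    · exact hshort h hh a b hab hlen
    obtain ⟨h', hh', hfold'⟩ := hfold h hh
    obtain ⟨α, β, hαβ, hhalf, htrim⟩ := exists_abs_sum_Ico_sub_sum_foldPairs_le (hb h hh) hab
    have hrec := ih h' hh' α β hαβ (by omega)
    have hhalf' : 2 * ((β : ℝ) - α) ≤ b - a := by
      have : ((2 * (β - α) : ℤ) : ℝ) ≤ ((b - a : ℤ) : ℝ) := Int.cast_le.2 hhalf
      push_cast at this
      linarith
    have hgain : 2 * (K + 2) < ε * (b - a) := (div_lt_iff₀' hε).1 hlen
    have := hfold' α β hαβ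
    have := abs_sub_abs_le_abs_sub (∑ n ∈ Ico a b, h n) (∑ n ∈ Ico α β, foldPairs h n)
    nlinarith [mul_le_mul_of_nonneg_left hhalf' hε.le]

def lagProd (f : ℤ → ℝ) (m n : ℤ) : ℝ := f n * f (n + m)

noncomputable def altLagProd (f : ℤ → ℝ) (m n : ℤ) : ℝ := (-1) ^ n * lagProd f m n

def IsTwistedDouble (f g : ℤ → ℝ) : Prop :=
  ∀ k, f (2 * k) = g k ∧ f (2 * k + 1) = (-1) ^ k * g k

theorem neg_one_zpow_mul_zpow_add (k j : ℤ) : (-1 : ℝ) ^ k * (-1) ^ (k + j) = (-1) ^ j := by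
  rw [← zpow_add₀ (by norm_num), ← add_assoc, ← two_mul, zpow_add₀ (by norm_num),
    (even_two_mul k).neg_one_zpow, one_mul]

namespace IsTwistedDouble

variable {f g : ℤ → ℝ}

theorem foldPairs_lagProd_two_mul (hfg : IsTwistedDouble f g) (j : ℤ) :
    foldPairs (lagProd f (2 * j)) = fun n => (1 + (-1) ^ j) * lagProd g j n := by
  funext n
  simp only [foldPairs, lagProd]
  rw [show 2 * n + 2 * j = 2 * (n + j) by ring, show 2 * n + 1 + 2 * j = 2 * (n + j) + 1 by ring,
    (hfg n).1, (hfg n).2, (hfg (n + j)).1, (hfg (n + j)).2]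
  linear_combination g n * g (n + j) * neg_one_zpow_mul_zpow_add n j

theorem foldPairs_lagProd_two_mul_add_one (hfg : IsTwistedDouble f g) (j : ℤ) :
    foldPairs (lagProd f (2 * j + 1)) =
      fun n => (-1) ^ j * altLagProd g j n + altLagProd g (j + 1) n := by
  funext n
  simp only [foldPairs, altLagProd, lagProd]
  rw [show 2 * n + (2 * j + 1) = 2 * (n + j) + 1 by ring,
    show 2 * n + 1 + (2 * j + 1) = 2 * (n + (j + 1)) by ring,
    (hfg n).1, (hfg n).2, (hfg (n + j)).2, (hfg (n + (j + 1))).1]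
  linear_combination g n * g (n + j) * zpow_add₀ (by norm_num : (-1 : ℝ) ≠ 0) n j

theorem foldPairs_altLagProd_two_mul (hfg : IsTwistedDouble f g) (j : ℤ) :
    foldPairs (altLagProd f (2 * j)) = fun n => (1 - (-1) ^ j) * lagProd g j n := by
  funext n
  simp only [foldPairs, altLagProd, lagProd]
  rw [show 2 * n + 2 * j = 2 * (n + j) by ring, show 2 * n + 1 + 2 * j = 2 * (n + j) + 1 by ring,
    (hfg n).1, (hfg n).2, (hfg (n + j)).1, (hfg (n + j)).2, (even_two_mul n).neg_one_zpow,
    (odd_two_mul_add_one n).neg_one_zpow]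
  linear_combination -(g n * g (n + j) * neg_one_zpow_mul_zpow_add n j)

theorem foldPairs_altLagProd_two_mul_add_one (hfg : IsTwistedDouble f g) (j : ℤ) :
    foldPairs (altLagProd f (2 * j + 1)) =
      fun n => (-1) ^ j * altLagProd g j n - altLagProd g (j + 1) n := by
  funext n
  simp only [foldPairs, altLagProd, lagProd]
  rw [show 2 * n + (2 * j + 1) = 2 * (n + j) + 1 by ring,
    show 2 * n + 1 + (2 * j + 1) = 2 * (n + (j + 1)) by ring,
    (hfg n).1, (hfg n).2, (hfg (n + j)).2, (hfg (n + (j + 1))).1, (even_two_mul n).neg_one_zpow,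
    (odd_two_mul_add_one n).neg_one_zpow]
  linear_combination g n * g (n + j) * zpow_add₀ (by norm_num : (-1 : ℝ) ≠ 0) n j

end IsTwistedDouble

theorem abs_lagProd_le {f : ℤ → ℝ} (hf : ∀ n, |f n| = 1) (m n : ℤ) : |lagProd f m n| ≤ 1 := by
  simp [lagProd, abs_mul, hf]

theorem abs_altLagProd_le {f : ℤ → ℝ} (hf : ∀ n, |f n| = 1) (m n : ℤ) :
    |altLagProd f m n| ≤ 1 := by
  simp [altLagProd, lagProd, abs_mul, hf]

theorem altLagProd_zero {f : ℤ → ℝ} (hf : ∀ n, |f n| = 1) :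
    altLagProd f 0 = fun n => (-1) ^ n := by
  funext n
  rw [altLagProd, lagProd, add_zero, ← abs_mul_abs_self, hf, mul_one, mul_one]

structure IsRudinShapiroPair (f g : ℤ → ℝ) : Prop where
  abs_fst : ∀ n, |f n| = 1
  abs_snd : ∀ n, |g n| = 1
  twistedDouble_fst : IsTwistedDouble f g
  twistedDouble_snd : IsTwistedDouble g f

namespace IsRudinShapiroPair

variable {f g : ℤ → ℝ}

theorem symm (hp : IsRudinShapiroPair f g) : IsRudinShapiroPair g f :=
  ⟨hp.abs_snd, hp.abs_fst, hp.twistedDouble_snd, hp.twistedDouble_fst⟩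

theorem sublinearSums_altLagProd_zero (hp : IsRudinShapiroPair f g) :
    SublinearSums (altLagProd f 0) := by
  rw [altLagProd_zero hp.abs_fst]
  exact .of_abs_sum_le 1 abs_sum_Ico_neg_one_zpow_le

theorem sublinearSums_altLagProd_one (hp : IsRudinShapiroPair f g) :
    SublinearSums (altLagProd f 1) := by
  refine sublinearSums_of_abs_sum_foldPairs_le (K := 1)
    (P := fun h => ∃ f g, IsRudinShapiroPair f g ∧ h = altLagProd f 1) ?_ ?_ ⟨f, g, hp, rfl⟩
  · rintro _ ⟨f, g, hp, rfl⟩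
    exact abs_altLagProd_le hp.abs_fst 1
  · rintro _ ⟨f, g, hp, rfl⟩
    refine ⟨_, ⟨g, f, hp.symm, rfl⟩, fun a b _ => ?_⟩
    have hfold := hp.twistedDouble_fst.foldPairs_altLagProd_two_mul_add_one 0
    simp only [mul_zero, zero_add, zpow_zero, one_mul] at hfold
    simp only [hfold, sum_sub_distrib, altLagProd_zero hp.abs_snd]
    linarith [abs_sub (∑ n ∈ Ico a b, (-1 : ℝ) ^ n) (∑ n ∈ Ico a b, altLagProd g 1 n),
      abs_sum_Ico_neg_one_zpow_le a b]

theorem sublinearSums_altLagProd_and_lagProd (m : ℕ) :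
    ∀ {f g : ℤ → ℝ}, IsRudinShapiroPair f g →
      SublinearSums (altLagProd f m) ∧ (m ≠ 0 → SublinearSums (lagProd f m)) := by
  induction m using Nat.strong_induction_on with
  | _ m ih =>
  intro f g hp
  have hfg := hp.twistedDouble_fst
  have hb := abs_lagProd_le hp.abs_fst m
  have hb' := abs_altLagProd_le hp.abs_fst m
  obtain ⟨j, rfl | rfl⟩ := Nat.even_or_odd' m
  · rcases Nat.eq_zero_or_pos j with rfl | hj
    · exact ⟨hp.sublinearSums_altLagProd_zero, by simp⟩
    have hA := (ih j (by omega) hp.symm).2 hj.ne'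
    push_cast at hb hb' ⊢
    refine ⟨.of_foldPairs hb' ?_, fun _ => .of_foldPairs hb ?_⟩
    · rw [hfg.foldPairs_altLagProd_two_mul]
      exact hA.const_mul _
    · rw [hfg.foldPairs_lagProd_two_mul]
      exact hA.const_mul _
  · have hB : SublinearSums (altLagProd g j) := (ih j (by omega) hp.symm).1
    have hB' : SublinearSums (altLagProd g (j + 1)) := by
      rcases Nat.eq_zero_or_pos j with rfl | hj
      · simpa using hp.symm.sublinearSums_altLagProd_one
      · exact_mod_cast (ih (j + 1) (by omega) hp.symm).1
    push_cast at hb hb' ⊢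
    refine ⟨.of_foldPairs hb' ?_, fun _ => .of_foldPairs hb ?_⟩
    · rw [hfg.foldPairs_altLagProd_two_mul_add_one]
      exact (hB.const_mul _).sub hB'
    · rw [hfg.foldPairs_lagProd_two_mul_add_one]
      exact (hB.const_mul _).add hB'

theorem sublinearSums_lagProd (hp : IsRudinShapiroPair f g) {m : ℤ} (hm : m ≠ 0) :
    SublinearSums (lagProd f m) := by
  have hlag := (sublinearSums_altLagProd_and_lagProd m.natAbs hp).2 (Int.natAbs_ne_zero.2 hm)
  rcases Int.natAbs_eq m with hpos | hneg
  · rwa [← hpos] at hlag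
  · have hshift := hlag.comp_add_const m
    convert hshift using 2 with n
    rw [lagProd, lagProd, add_assoc, show m + m.natAbs = 0 by omega, add_zero, mul_comm]

end IsRudinShapiroPair

theorem isRudinShapiroPair_of_recursion {w : ℤ → ℝ} (hval : ∀ n, w n = 1 ∨ w n = -1)
    (hrec1 : ∀ n : ℤ, ∀ l : ℤ, l = 0 ∨ l = 1 → w (4 * n + l) = w n)
    (hrec2 : ∀ n : ℤ, ∀ l : ℤ, l = 2 ∨ l = 3 → w (4 * n + l) = (-1 : ℝ) ^ (n + l) * w n) :
    IsRudinShapiroPair w fun k => w (2 * k) := by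
  have habs : ∀ n, |w n| = 1 := fun n => by rcases hval n with h | h <;> simp [h]
  have h0 : ∀ n, w (4 * n) = w n := fun n => by simpa using hrec1 n 0 (by simp)
  have h1 : ∀ n, w (4 * n + 1) = w n := fun n => hrec1 n 1 (by simp)
  have h2 : ∀ n, w (4 * n + 2) = (-1) ^ n * w n := fun n => by
    rw [hrec2 n 2 (by simp), zpow_add₀ (by norm_num)]
    norm_num
  have h3 : ∀ n, w (4 * n + 3) = -((-1) ^ n * w n) := fun n => by
    rw [hrec2 n 3 (by simp), zpow_add₀ (by norm_num)]
    norm_num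
  refine ⟨habs, fun n => habs _, fun k => ⟨rfl, ?_⟩, fun k => ?_⟩
  · obtain ⟨t, rfl | rfl⟩ := Int.even_or_odd' k
    · rw [show 2 * (2 * t) + 1 = 4 * t + 1 by ring, show 2 * (2 * t) = 4 * t by ring, h0, h1,
        (even_two_mul t).neg_one_zpow, one_mul]
    · rw [show 2 * (2 * t + 1) + 1 = 4 * t + 3 by ring, show 2 * (2 * t + 1) = 4 * t + 2 by ring,
        h2, h3, (odd_two_mul_add_one t).neg_one_zpow, neg_one_mul]
  · rw [show 2 * (2 * k) = 4 * k by ring, show 2 * (2 * k + 1) = 4 * k + 2 by ring, h0, h2]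
    exact ⟨rfl, rfl⟩

end RudinShapiro

theorem rudinShapiro_autocorrelation_eq_zero_general
    (w : ℤ → ℝ)
    (hval : ∀ n, w n = 1 ∨ w n = -1)
    (hrec1 : ∀ n : ℤ, ∀ l : ℤ, l = 0 ∨ l = 1 → w (4 * n + l) = w n)
    (hrec2 : ∀ n : ℤ, ∀ l : ℤ, l = 2 ∨ l = 3 → w (4 * n + l) = (-1 : ℝ) ^ (n + l) * w n) :
    ∀ m : ℤ, m ≠ 0 → Tendsto
      (fun N : ℕ => (∑ n ∈ Finset.Icc (-(N : ℤ)) N, w n * w (n + m)) / (2 * N + 1))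
      atTop (nhds 0) := fun _ hm =>
  ((RudinShapiro.isRudinShapiroPair_of_recursion hval hrec1 hrec2).sublinearSums_lagProd
    hm).tendsto_sum_Icc_div

/-- The off-diagonal autocorrelation coefficients of the binary Rudin–Shapiro
sequence all vanish. -/
theorem rudinShapiro_autocorrelation_eq_zero
    (w : ℤ → ℝ)
    (hval : ∀ n, w n = 1 ∨ w n = -1)
    (hm1 : w (-1) = -1) (h0 : w 0 = 1)
    (hrec1 : ∀ n : ℤ, ∀ l : ℤ, l = 0 ∨ l = 1 → w (4 * n + l) = w n)
    (hrec2 : ∀ n : ℤ, ∀ l : ℤ, l = 2 ∨ l = 3 → w (4 * n + l) = (-1 : ℝ) ^ (n + l) * w n) :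
    ∀ m : ℤ, m ≠ 0 → Tendsto
      (fun N : ℕ => (∑ n ∈ Finset.Icc (-(N : ℤ)) N, w n * w (n + m)) / (2 * N + 1))
      atTop (nhds 0) :=
  rudinShapiro_autocorrelation_eq_zero_general w hval hrec1 hrec2
end

section
/- Let w : ℤ → {±1} be any sequence with autocorrelation coefficients η(m) = lim_{N→∞} (1/(2N+1)) ∑_{n=−N}^{N} w(n)w(n+m) existing for all m, and let (X(n))_{n∈ℤ} be i.i.d. ±1-valued with P(X(n)=1)=p. Then almost surely the sequence w(n)X(n) has autocorrelation coefficients η_p(m) = (2p−1)²·η(m) for m ≠ 0 and η_p(0) = 1. -/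
/-!
For `m = 0` every term of the average is `1`. For `m ≠ 0` write, with `c n = w n w (n + m)`
and `Z n = X n X (n + m) - (2p - 1)²`,
  `w n X n · w (n + m) X (n + m) = c n Z n + (2p - 1)² c n`.
The second part averages to `(2p - 1)² η m`. The `Z n` are bounded and centred, and `Z i`, `Z j`
are independent unless `j - i ∈ {-m, 0, m}`, so the second moment of a sum of `L` terms `c n Z n`
is `O(L)`. Along `N = k²` the averages therefore have summable second moments and tend to `0`
almost surely; consecutive squares are only `O(k)` apart, which fills the gaps.
-/

open MeasureTheory ProbabilityTheory Filter Topology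

noncomputable def symmetricAverage (f : ℤ → ℝ) (N : ℕ) : ℝ :=
  (∑ n ∈ Finset.Icc (-(N : ℤ)) N, f n) / (2 * N + 1)

lemma card_Icc_neg_self (N : ℕ) : (Finset.Icc (-(N : ℤ)) N).card = 2 * N + 1 := by
  rw [Int.card_Icc]; omega

lemma symmetricAverage_of_forall_eq_one {f : ℤ → ℝ} (hf : ∀ n, f n = 1) (N : ℕ) :
    symmetricAverage f N = 1 := by
  rw [symmetricAverage, Finset.sum_congr rfl fun n _ => hf n, Finset.sum_const,
    card_Icc_neg_self, nsmul_one]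
  push_cast
  exact div_self (by positivity)

lemma symmetricAverage_add_const_mul (f g : ℤ → ℝ) (c : ℝ) (N : ℕ) :
    symmetricAverage (fun n => f n + c * g n) N =
      symmetricAverage f N + c * symmetricAverage g N := by
  simp only [symmetricAverage, Finset.sum_add_distrib, ← Finset.mul_sum]
  ring

lemma abs_symmetricAverage_le {f : ℤ → ℝ} {B : ℝ} (hf : ∀ n, |f n| ≤ B) (N : ℕ) :
    |symmetricAverage f N| ≤ B := by
  have hpos : (0 : ℝ) < 2 * N + 1 := by positivity
  rw [symmetricAverage, abs_div, abs_of_pos hpos, div_le_iff₀ hpos]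
  calc |∑ n ∈ Finset.Icc (-(N : ℤ)) N, f n| ≤ ∑ n ∈ Finset.Icc (-(N : ℤ)) N, B :=
        (Finset.abs_sum_le_sum_abs _ _).trans (Finset.sum_le_sum fun n _ => hf n)
    _ = B * (2 * N + 1) := by
        rw [Finset.sum_const, card_Icc_neg_self, nsmul_eq_mul]; push_cast; ring

lemma tendsto_nat_sqrt_atTop : Tendsto Nat.sqrt atTop atTop :=
  tendsto_atTop_atTop.2 fun b => ⟨b * b, fun _ hN => Nat.sqrt_eq b ▸ Nat.sqrt_le_sqrt hN⟩

lemma abs_symmetricAverage_le_of_sqrt {f : ℤ → ℝ} {B : ℝ} (hf : ∀ n, |f n| ≤ B) (N : ℕ) :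
    |symmetricAverage f N| ≤
      |symmetricAverage f (Nat.sqrt N ^ 2)| + 4 * B * Nat.sqrt N / (2 * Nat.sqrt N ^ 2 + 1) := by
  have hB : 0 ≤ B := (abs_nonneg _).trans (hf 0)
  set s := Nat.sqrt N
  have hsN : s ^ 2 ≤ N := Nat.sqrt_le' N
  have hNs : N < s ^ 2 + 2 * s + 1 := by
    have := Nat.lt_succ_sqrt' N
    rw [Nat.succ_eq_add_one, add_sq] at this
    linarith
  have hsub : Finset.Icc (-((s ^ 2 : ℕ) : ℤ)) (s ^ 2 : ℕ) ⊆ Finset.Icc (-(N : ℤ)) N :=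
    Finset.Icc_subset_Icc (by omega) (by omega)
  set gap := Finset.Icc (-(N : ℤ)) N \ Finset.Icc (-((s ^ 2 : ℕ) : ℤ)) (s ^ 2 : ℕ)
  have hgap : |∑ n ∈ gap, f n| ≤ 4 * B * s := by
    have hcard : (gap.card : ℝ) ≤ 4 * s := by
      rw [Finset.card_sdiff_of_subset hsub, card_Icc_neg_self, card_Icc_neg_self]
      exact_mod_cast (by omega : 2 * N + 1 - (2 * s ^ 2 + 1) ≤ 4 * s)
    calc _ ≤ ∑ n ∈ gap, B :=
          (Finset.abs_sum_le_sum_abs _ _).trans (Finset.sum_le_sum fun n _ => hf n)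
      _ = gap.card * B := by rw [Finset.sum_const, nsmul_eq_mul]
      _ ≤ 4 * B * s := by nlinarith
  have hD : (2 * ((s ^ 2 : ℕ) : ℝ) + 1) ≤ 2 * N + 1 := by
    have : ((s ^ 2 : ℕ) : ℝ) ≤ N := by exact_mod_cast hsN
    linarith
  set A := ∑ n ∈ Finset.Icc (-((s ^ 2 : ℕ) : ℤ)) (s ^ 2 : ℕ), f n
  calc |symmetricAverage f N| = |∑ n ∈ gap, f n + A| / (2 * N + 1) := by
        rw [symmetricAverage, Finset.sum_sdiff hsub, abs_div,
          abs_of_pos (by positivity : (0 : ℝ) < 2 * N + 1)]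
    _ ≤ (|A| + 4 * B * s) / (2 * ((s ^ 2 : ℕ) : ℝ) + 1) := by
        gcongr
        exact (abs_add_le _ _).trans (by linarith)
    _ = _ := by
        have hpos : (0 : ℝ) < 2 * ((s ^ 2 : ℕ) : ℝ) + 1 := by positivity
        simp only [symmetricAverage, abs_div, add_div, abs_of_pos hpos]
        push_cast
        rfl

lemma tendsto_symmetricAverage_of_tendsto_sq {f : ℤ → ℝ} {B : ℝ} (hf : ∀ n, |f n| ≤ B)
    (h : Tendsto (fun k : ℕ => symmetricAverage f (k ^ 2)) atTop (𝓝 0)) :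
    Tendsto (symmetricAverage f) atTop (𝓝 0) := by
  have hlin : Tendsto (fun k : ℕ => (k : ℝ) / (2 * k ^ 2 + 1)) atTop (𝓝 0) := by
    refine squeeze_zero' (.of_forall fun k => by positivity) ?_
      tendsto_one_div_atTop_nhds_zero_nat
    filter_upwards [eventually_gt_atTop 0] with k hk
    have hk : (0 : ℝ) < k := by exact_mod_cast hk
    rw [div_le_div_iff₀ (by positivity) hk]
    nlinarith
  have hbound : Tendsto (fun k : ℕ => |symmetricAverage f (k ^ 2)| +
      4 * B * k / (2 * k ^ 2 + 1)) atTop (𝓝 0) := by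
    simpa [mul_div_assoc] using h.abs.add (hlin.const_mul (4 * B))
  exact squeeze_zero_norm (abs_symmetricAverage_le_of_sqrt hf) (hbound.comp tendsto_nat_sqrt_atTop)

lemma summable_one_div_two_mul_sq_add_one : Summable fun k : ℕ => 1 / (2 * (k : ℝ) ^ 2 + 1) := by
  refine Summable.of_norm_bounded_eventually_nat (Real.summable_one_div_nat_pow.2 one_lt_two) ?_
  filter_upwards [eventually_gt_atTop 0] with k hk
  rw [Real.norm_of_nonneg (by positivity)]
  gcongr
  linarith [sq_nonneg (k : ℝ)]

section Probability

variable {Ω : Type*} [MeasurableSpace Ω] {μ : Measure Ω}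

lemma ae_tendsto_zero_of_summable_integral_sq {Y : ℕ → Ω → ℝ} (hY : ∀ k, AEMeasurable (Y k) μ)
    (hint : ∀ k, Integrable (fun ω => Y k ω ^ 2) μ)
    (hsum : Summable fun k => ∫ ω, Y k ω ^ 2 ∂μ) :
    ∀ᵐ ω ∂μ, Tendsto (fun k => Y k ω) atTop (𝓝 0) := by
  have hmeas : ∀ k, AEMeasurable (fun ω => ENNReal.ofReal (Y k ω ^ 2)) μ :=
    fun k => ((hY k).pow_const 2).ennreal_ofReal
  have hfin : ∫⁻ ω, ∑' k, ENNReal.ofReal (Y k ω ^ 2) ∂μ ≠ ⊤ := by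
    rw [lintegral_tsum hmeas]
    simp_rw [← ofReal_integral_eq_lintegral_ofReal (hint _) (ae_of_all _ fun _ => sq_nonneg _)]
    rw [← ENNReal.ofReal_tsum_of_nonneg (fun k => integral_nonneg fun _ => sq_nonneg _) hsum]
    exact ENNReal.ofReal_ne_top
  filter_upwards [ae_lt_top' (AEMeasurable.tsum hmeas) hfin] with ω hω
  have h := ENNReal.tendsto_atTop_zero_of_tsum_ne_top hω.ne
  have hsq : Tendsto (fun k => Y k ω ^ 2) atTop (𝓝 0) := by
    simpa [Function.comp_def, ENNReal.toReal_ofReal (sq_nonneg _)] using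
      (ENNReal.tendsto_toReal ENNReal.zero_ne_top).comp h
  have habs := hsq.sqrt
  simp only [Real.sqrt_sq_eq_abs, Real.sqrt_zero] at habs
  exact (tendsto_zero_iff_abs_tendsto_zero _).2 habs

lemma integral_sq_sum_le_of_orthogonal [IsProbabilityMeasure μ] {ι : Type*} (a : ι → Ω → ℝ)
    (F : ι → Finset ι) (K : ℕ) (B : ℝ) (hmeas : ∀ i, AEStronglyMeasurable (a i) μ)
    (hbound : ∀ i, ∀ᵐ ω ∂μ, |a i ω| ≤ B) (hF : ∀ i, (F i).card ≤ K)
    (horth : ∀ i j, j ∉ F i → ∫ ω, a i ω * a j ω ∂μ = 0) (s : Finset ι) :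
    ∫ ω, (∑ i ∈ s, a i ω) ^ 2 ∂μ ≤ K * B ^ 2 * s.card := by
  classical
  have hprod : ∀ i j, ∀ᵐ ω ∂μ, ‖a i ω * a j ω‖ ≤ B ^ 2 := fun i j => by
    filter_upwards [hbound i, hbound j] with ω hi hj
    rw [norm_mul, sq]
    exact mul_le_mul hi hj (abs_nonneg _) ((abs_nonneg _).trans hi)
  have hint : ∀ i j, Integrable (fun ω => a i ω * a j ω) μ := fun i j =>
    .of_bound ((hmeas i).mul (hmeas j)) _ (hprod i j)
  have hrow : ∀ i, ∑ j ∈ s, ∫ ω, a i ω * a j ω ∂μ ≤ K * B ^ 2 := fun i => by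
    rw [← Finset.sum_subset Finset.inter_subset_left fun j _ hj =>
      horth i j fun h => hj (Finset.mem_inter.2 ⟨‹_›, h⟩)]
    calc ∑ j ∈ s ∩ F i, ∫ ω, a i ω * a j ω ∂μ ≤ ∑ j ∈ s ∩ F i, B ^ 2 :=
          Finset.sum_le_sum fun j _ => (le_abs_self _).trans <| by
            simpa using norm_integral_le_of_norm_le_const (hprod i j)
      _ = (s ∩ F i).card * B ^ 2 := by rw [Finset.sum_const, nsmul_eq_mul]
      _ ≤ K * B ^ 2 := by
          gcongr
          exact_mod_cast (Finset.card_le_card Finset.inter_subset_right).trans (hF i)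
  calc ∫ ω, (∑ i ∈ s, a i ω) ^ 2 ∂μ = ∑ i ∈ s, ∑ j ∈ s, ∫ ω, a i ω * a j ω ∂μ := by
        simp_rw [sq, Finset.sum_mul_sum]
        rw [integral_finsetSum _ fun i _ => integrable_finsetSum _ fun j _ => hint i j]
        exact Finset.sum_congr rfl fun i _ => integral_finsetSum _ fun j _ => hint i j
    _ ≤ ∑ i ∈ s, (K * B ^ 2 : ℝ) := Finset.sum_le_sum fun i _ => hrow i
    _ = K * B ^ 2 * s.card := by rw [Finset.sum_const, nsmul_eq_mul, mul_comm]

theorem ae_tendsto_symmetricAverage_zero_of_orthogonal [IsProbabilityMeasure μ]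
    (a : ℤ → Ω → ℝ) (F : ℤ → Finset ℤ) (K : ℕ) (B : ℝ) (hmeas : ∀ n, Measurable (a n))
    (hbound : ∀ n, ∀ᵐ ω ∂μ, |a n ω| ≤ B) (hF : ∀ n, (F n).card ≤ K)
    (horth : ∀ i j, j ∉ F i → ∫ ω, a i ω * a j ω ∂μ = 0) :
    ∀ᵐ ω ∂μ, Tendsto (symmetricAverage (a · ω)) atTop (𝓝 0) := by
  have hbound' : ∀ᵐ ω ∂μ, ∀ n, |a n ω| ≤ B := ae_all_iff.2 hbound
  set Y : ℕ → Ω → ℝ := fun k ω => symmetricAverage (a · ω) (k ^ 2)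
  have hYmeas : ∀ k, Measurable (Y k) := fun k =>
    (Finset.measurable_sum _ fun n _ => hmeas n).div_const _
  have hYint : ∀ k, Integrable (fun ω => Y k ω ^ 2) μ := fun k => by
    refine .of_bound ((hYmeas k).pow_const 2).aestronglyMeasurable (B ^ 2) ?_
    filter_upwards [hbound'] with ω hω
    rw [Real.norm_eq_abs, abs_pow]
    exact pow_le_pow_left₀ (abs_nonneg _) (abs_symmetricAverage_le hω _) 2
  have hYmom : ∀ k, ∫ ω, Y k ω ^ 2 ∂μ ≤ K * B ^ 2 * (1 / (2 * (k : ℝ) ^ 2 + 1)) := fun k => by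
    have h := integral_sq_sum_le_of_orthogonal a F K B (fun n => (hmeas n).aestronglyMeasurable)
      hbound hF horth (Finset.Icc (-((k ^ 2 : ℕ) : ℤ)) (k ^ 2 : ℕ))
    simp only [Y, symmetricAverage, div_pow, integral_div, card_Icc_neg_self] at h ⊢
    push_cast at h ⊢
    rw [div_le_iff₀ (by positivity)]
    exact h.trans_eq (by field_simp)
  have hsub := ae_tendsto_zero_of_summable_integral_sq (fun k => (hYmeas k).aemeasurable) hYint
    (.of_nonneg_of_le (fun k => integral_nonneg fun ω => sq_nonneg _) hYmom
      (summable_one_div_two_mul_sq_add_one.mul_left _))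
  filter_upwards [hsub, hbound'] with ω hω hb
  exact tendsto_symmetricAverage_of_tendsto_sq hb hω

section SignVariable

variable [IsProbabilityMeasure μ] {p : ℝ} {f : Ω → ℝ}

lemma ae_eq_one_or_eq_neg_one (hp : p ∈ Set.Icc (0 : ℝ) 1) (hf : Measurable f)
    (hone : μ {ω | f ω = 1} = ENNReal.ofReal p)
    (hmone : μ {ω | f ω = -1} = ENNReal.ofReal (1 - p)) :
    ∀ᵐ ω ∂μ, f ω = 1 ∨ f ω = -1 := by
  have hdisj : Disjoint {ω | f ω = 1} {ω | f ω = -1} :=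
    Set.disjoint_left.2 fun ω (h1 : f ω = 1) (h2 : f ω = -1) => by linarith
  have hunion : μ ({ω | f ω = 1} ∪ {ω | f ω = -1}) = 1 := by
    rw [measure_union hdisj (hf (measurableSet_singleton _)), hone, hmone,
      ← ENNReal.ofReal_add hp.1 (by linarith [hp.2]), add_sub_cancel, ENNReal.ofReal_one]
  exact (prob_compl_eq_zero_iff ((hf (measurableSet_singleton _)).union
    (hf (measurableSet_singleton _)))).2 hunion

lemma integral_eq_two_mul_sub_one (hp : p ∈ Set.Icc (0 : ℝ) 1) (hf : Measurable f)
    (hone : μ {ω | f ω = 1} = ENNReal.ofReal p)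
    (hmone : μ {ω | f ω = -1} = ENNReal.ofReal (1 - p)) :
    ∫ ω, f ω ∂μ = 2 * p - 1 := by
  have hA : MeasurableSet {ω | f ω = 1} := hf (measurableSet_singleton 1)
  have hB : MeasurableSet {ω | f ω = -1} := hf (measurableSet_singleton (-1))
  have hf' : f =ᵐ[μ] {ω | f ω = 1}.indicator 1 - {ω | f ω = -1}.indicator 1 := by
    filter_upwards [ae_eq_one_or_eq_neg_one hp hf hone hmone] with ω hω
    rcases hω with h | h <;> norm_num [Set.indicator, h]
  rw [integral_congr_ae hf']
  simp only [Pi.sub_apply]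
  rw [integral_sub ((integrable_const 1).indicator hA)
    ((integrable_const 1).indicator hB), integral_indicator_one hA, integral_indicator_one hB,
    measureReal_def, measureReal_def, hone, hmone, ENNReal.toReal_ofReal hp.1,
    ENNReal.toReal_ofReal (by linarith [hp.2])]
  ring

end SignVariable

section CenteredProducts

variable [IsProbabilityMeasure μ] {X : ℤ → Ω → ℝ} {e : ℝ}

lemma integral_mul_sub_sq_eq_zero (hmeas : ∀ n, Measurable (X n)) (hindep : iIndepFun X μ)
    (hbound : ∀ n, ∀ᵐ ω ∂μ, |X n ω| ≤ 1) (hmean : ∀ n, ∫ ω, X n ω ∂μ = e) {i k : ℤ}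
    (hik : i ≠ k) :
    ∫ ω, X i ω * X k ω - e ^ 2 ∂μ = 0 := by
  have hprod : Integrable (fun ω => X i ω * X k ω) μ :=
    .of_bound ((hmeas i).mul (hmeas k)).aestronglyMeasurable 1 (by
      filter_upwards [hbound i, hbound k] with ω hi hk
      simpa [abs_mul] using mul_le_one₀ hi (abs_nonneg _) hk)
  have h := (hindep.indepFun hik).integral_mul_eq_mul_integral
    (hmeas i).aestronglyMeasurable (hmeas k).aestronglyMeasurable
  simp only [Pi.mul_apply] at h
  rw [integral_sub hprod (integrable_const _), h, hmean, hmean]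
  simp [sq]

lemma integral_mul_sub_sq_mul_eq_zero (hmeas : ∀ n, Measurable (X n)) (hindep : iIndepFun X μ)
    (hbound : ∀ n, ∀ᵐ ω ∂μ, |X n ω| ≤ 1) (hmean : ∀ n, ∫ ω, X n ω ∂μ = e) {i k j l : ℤ}
    (hik : i ≠ k) (hij : i ≠ j) (hil : i ≠ l) (hkj : k ≠ j) (hkl : k ≠ l) :
    ∫ ω, (X i ω * X k ω - e ^ 2) * (X j ω * X l ω - e ^ 2) ∂μ = 0 := by
  have hsub : Measurable fun x : ℝ => x - e ^ 2 := measurable_id.sub_const _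
  have hind : IndepFun (fun ω => X i ω * X k ω - e ^ 2) (fun ω => X j ω * X l ω - e ^ 2) μ :=
    (hindep.indepFun_mul_mul hmeas i k j l hij hil hkj hkl).comp hsub hsub
  rw [← Pi.mul_def (fun ω => X i ω * X k ω - e ^ 2), hind.integral_mul_eq_mul_integral
    (((hmeas i).mul (hmeas k)).sub_const _).aestronglyMeasurable
    (((hmeas j).mul (hmeas l)).sub_const _).aestronglyMeasurable,
    integral_mul_sub_sq_eq_zero hmeas hindep hbound hmean hik, zero_mul]

theorem ae_tendsto_symmetricAverage_centered_products (hmeas : ∀ n, Measurable (X n))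
    (hindep : iIndepFun X μ) (hbound : ∀ n, ∀ᵐ ω ∂μ, |X n ω| ≤ 1)
    (hmean : ∀ n, ∫ ω, X n ω ∂μ = e) {c : ℤ → ℝ} {C : ℝ} (hc : ∀ n, |c n| ≤ C) {m : ℤ}
    (hm : m ≠ 0) :
    ∀ᵐ ω ∂μ, Tendsto (symmetricAverage fun n => c n * (X n ω * X (n + m) ω - e ^ 2))
      atTop (𝓝 0) := by
  refine ae_tendsto_symmetricAverage_zero_of_orthogonal
    (fun n ω => c n * (X n ω * X (n + m) ω - e ^ 2)) (fun i => {i - m, i, i + m}) 3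
    (C * (1 + e ^ 2)) (fun n => measurable_const.mul (((hmeas n).mul (hmeas _)).sub_const _))
    (fun n => ?_) (fun _ => Finset.card_le_three) (fun i j hj => ?_)
  · filter_upwards [hbound n, hbound (n + m)] with ω h1 h2
    have hZ : |X n ω * X (n + m) ω - e ^ 2| ≤ 1 + e ^ 2 := (abs_sub _ _).trans <| by
      rw [abs_mul, abs_of_nonneg (sq_nonneg e)]
      gcongr
      exact mul_le_one₀ h1 (abs_nonneg _) h2
    rw [abs_mul]
    exact mul_le_mul (hc n) hZ (abs_nonneg _) ((abs_nonneg _).trans (hc n))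
  · simp only [Finset.mem_insert, Finset.mem_singleton, not_or] at hj
    simp_rw [mul_mul_mul_comm (c i), integral_const_mul]
    rw [integral_mul_sub_sq_mul_eq_zero hmeas hindep hbound hmean (by omega) (by omega)
      (by omega) (by omega) (by omega), mul_zero]

end CenteredProducts

end Probability

/-- Bernoullisation: if the deterministic `±1`-sequence `w` has autocorrelation
coefficients `η`, then after independent random sign flips (keeping the sign with
probability `p`) the autocorrelation coefficients are almost surely
`(2p-1)² η(m)` for `m ≠ 0`, and `1` for `m = 0`. -/
theorem bernoullisation_autocorrelation
    {Ω : Type*} [MeasurableSpace Ω] (μ : Measure Ω) [IsProbabilityMeasure μ]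
    (p : ℝ) (hp : p ∈ Set.Icc (0 : ℝ) 1)
    (w : ℤ → ℝ) (hw : ∀ n, w n = 1 ∨ w n = -1)
    (η : ℤ → ℝ)
    (hη : ∀ m : ℤ, Tendsto
      (fun N : ℕ => (∑ n ∈ Finset.Icc (-(N : ℤ)) N, w n * w (n + m)) / (2 * N + 1))
      atTop (nhds (η m)))
    (X : ℤ → Ω → ℝ) (hmeas : ∀ n, Measurable (X n))
    (hindep : iIndepFun X μ)
    (hone : ∀ n, μ {ω | X n ω = 1} = ENNReal.ofReal p)
    (hmone : ∀ n, μ {ω | X n ω = -1} = ENNReal.ofReal (1 - p)) :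
    ∀ m : ℤ, ∀ᵐ ω ∂μ, Tendsto
      (fun N : ℕ => (∑ n ∈ Finset.Icc (-(N : ℤ)) N,
        (w n * X n ω) * (w (n + m) * X (n + m) ω)) / (2 * N + 1))
      atTop (nhds (if m = 0 then 1 else (2 * p - 1) ^ 2 * η m)) := by
  intro m
  have hsigns n : ∀ᵐ ω ∂μ, X n ω = 1 ∨ X n ω = -1 :=
    ae_eq_one_or_eq_neg_one hp (hmeas n) (hone n) (hmone n)
  rcases eq_or_ne m 0 with rfl | hm
  · filter_upwards [ae_all_iff.2 hsigns] with ω hω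
    rw [if_pos rfl]
    refine tendsto_const_nhds.congr fun N =>
      (symmetricAverage_of_forall_eq_one (fun n => ?_) N).symm
    rcases hw n with h | h <;> rcases hω n with h' | h' <;> simp [h, h']
  · have hbound n : ∀ᵐ ω ∂μ, |X n ω| ≤ 1 := by
      filter_upwards [hsigns n] with ω h
      rcases h with h | h <;> simp [h]
    have hweight n : |w n * w (n + m)| ≤ 1 := by
      rcases hw n with h | h <;> rcases hw (n + m) with h' | h' <;> simp [h, h']
    filter_upwards [ae_tendsto_symmetricAverage_centered_products hmeas hindep hbound
      (fun n => integral_eq_two_mul_sub_one hp (hmeas n) (hone n) (hmone n)) hweight hm]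
      with ω hω
    rw [if_neg hm]
    have hlim := hω.add ((hη m).const_mul ((2 * p - 1) ^ 2))
    rw [zero_add] at hlim
    refine hlim.congr fun N => ?_
    change _ + _ * symmetricAverage (fun n => w n * w (n + m)) N =
      symmetricAverage (fun n => w n * X n ω * (w (n + m) * X (n + m) ω)) N
    rw [← symmetricAverage_add_const_mul]
    congr 1
    funext n
    ring
end

section
/- Consider the dimer subshift with the Bernoulli measure where each dimer {2n, 2n+1} is independently decorated (1,−1) or (−1,1) with probability 1/2 each. Then almost surely the autocorrelation coefficients η(m) = lim_{N→∞} (1/(2N+1)) ∑_{n=−N}^{N} w(n)w(n+m) exist and equal η(0)=1, η(±1)=−1/2, and η(m)=0 for |m| ≥ 2. -/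
/-
On a dimer `{2k, 2k+1}` the products `w(n) w(n+m)` add up to `2 ε_k ε_{k+d}` when `m = 2d` and to
`-ε_k ε_{k+d} - ε_k ε_{k+d+1}` when `m = 2d+1`, so the autocorrelation at `m` is half the Cesàro
mean of these pair sums, and it suffices to know the Cesàro means of `k ↦ ε_k ε_{k+e}`. For `e = 0`
this is `1`. For `e ≠ 0` the products are `±1`-valued with mean `0` and pairwise independent, also
when two of them share a factor: every function on `{±1}` is affine, so `±1`-valued variables are
independent as soon as they are uncorrelated, and their law is fixed by their mean. Etemadi's strong
law of large numbers then makes their Cesàro means vanish almost surely.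
-/

open MeasureTheory ProbabilityTheory Filter

/-- The dimer random sequence: `w(2n) = ε_n`, `w(2n+1) = -ε_n`. -/
noncomputable def dimerSeq {Ω : Type*} (ε : ℤ → Ω → ℝ) (ω : Ω) (n : ℤ) : ℝ :=
  if Even n then ε (n / 2) ω else -(ε ((n - 1) / 2) ω)

open Finset
open scoped Topology

section Sign

variable {Ω : Type*} [MeasurableSpace Ω] {μ : Measure Ω} {X Y : Ω → ℝ}

lemma ae_sign_mul (hX : ∀ᵐ ω ∂μ, X ω = 1 ∨ X ω = -1) (hY : ∀ᵐ ω ∂μ, Y ω = 1 ∨ Y ω = -1) :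
    ∀ᵐ ω ∂μ, (X * Y) ω = 1 ∨ (X * Y) ω = -1 := by
  filter_upwards [hX, hY] with ω hx hy
  rcases hx with hx | hx <;> rcases hy with hy | hy <;> simp [hx, hy]

variable [IsProbabilityMeasure μ]

lemma exists_affine_eq_on_sign (f : ℝ → ℝ) :
    ∃ a b : ℝ, ∀ x : ℝ, x = 1 ∨ x = -1 → f x = a + b * x :=
  ⟨(f 1 + f (-1)) / 2, (f 1 - f (-1)) / 2, by rintro x (rfl | rfl) <;> ring⟩

lemma integrable_of_sign (hXm : Measurable X) (hX : ∀ᵐ ω ∂μ, X ω = 1 ∨ X ω = -1) :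
    Integrable X μ :=
  .of_bound hXm.aestronglyMeasurable 1 <| hX.mono fun ω h => by rcases h with h | h <;> simp [h]

lemma integral_comp_of_sign (hXm : Measurable X) (hX : ∀ᵐ ω ∂μ, X ω = 1 ∨ X ω = -1)
    {f : ℝ → ℝ} {a b : ℝ} (hf : ∀ x : ℝ, x = 1 ∨ x = -1 → f x = a + b * x) :
    ∫ ω, f (X ω) ∂μ = a + b * ∫ ω, X ω ∂μ := by
  rw [integral_congr_ae (hX.mono fun ω h => hf _ h), integral_add (integrable_const a)
    ((integrable_of_sign hXm hX).const_mul b), integral_const, integral_const_mul]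
  simp

lemma measureReal_preimage_of_sign (hXm : Measurable X) (hX : ∀ᵐ ω ∂μ, X ω = 1 ∨ X ω = -1)
    {s : Set ℝ} (hs : MeasurableSet s) {a b : ℝ}
    (hab : ∀ x : ℝ, x = 1 ∨ x = -1 → s.indicator 1 x = a + b * x) :
    μ.real (X ⁻¹' s) = a + b * ∫ ω, X ω ∂μ := by
  rw [← integral_comp_of_sign hXm hX hab, ← integral_indicator_one (hXm hs)]
  rfl

lemma identDistrib_of_sign (hXm : Measurable X) (hYm : Measurable Y)
    (hX : ∀ᵐ ω ∂μ, X ω = 1 ∨ X ω = -1) (hY : ∀ᵐ ω ∂μ, Y ω = 1 ∨ Y ω = -1)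
    (h : ∫ ω, X ω ∂μ = ∫ ω, Y ω ∂μ) : IdentDistrib X Y μ μ where
  aemeasurable_fst := hXm.aemeasurable
  aemeasurable_snd := hYm.aemeasurable
  map_eq := by
    ext s hs
    obtain ⟨a, b, hab⟩ := exists_affine_eq_on_sign (s.indicator 1)
    rw [← measureReal_eq_measureReal_iff, map_measureReal_apply hXm hs,
      map_measureReal_apply hYm hs, measureReal_preimage_of_sign hXm hX hs hab,
      measureReal_preimage_of_sign hYm hY hs hab, h]

lemma indepFun_of_sign (hXm : Measurable X) (hYm : Measurable Y)
    (hX : ∀ᵐ ω ∂μ, X ω = 1 ∨ X ω = -1) (hY : ∀ᵐ ω ∂μ, Y ω = 1 ∨ Y ω = -1)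
    (h : ∫ ω, X ω * Y ω ∂μ = (∫ ω, X ω ∂μ) * ∫ ω, Y ω ∂μ) : IndepFun X Y μ := by
  rw [indepFun_iff_measure_inter_preimage_eq_mul]
  intro s t hs ht
  obtain ⟨a, b, hab⟩ := exists_affine_eq_on_sign (s.indicator 1)
  obtain ⟨c, d, hcd⟩ := exists_affine_eq_on_sign (t.indicator 1)
  have hXi := integrable_of_sign hXm hX
  have hYi := integrable_of_sign hYm hY
  have hXYi : Integrable (fun ω => X ω * Y ω) μ :=
    integrable_of_sign (hXm.mul hYm) (ae_sign_mul hX hY)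
  have hinter : μ.real (X ⁻¹' s ∩ Y ⁻¹' t)
      = ∫ ω, a * c + (a * d) * Y ω + (b * c) * X ω + (b * d) * (X ω * Y ω) ∂μ := by
    rw [← integral_indicator_one ((hXm hs).inter (hYm ht))]
    refine integral_congr_ae ?_
    filter_upwards [hX, hY] with ω hx hy
    simp only [Set.inter_indicator_one, Pi.mul_apply]
    change s.indicator 1 (X ω) * t.indicator 1 (Y ω) = _
    rw [hab _ hx, hcd _ hy]
    ring
  have hexpand : ∫ ω, a * c + (a * d) * Y ω + (b * c) * X ω + (b * d) * (X ω * Y ω) ∂μ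
      = a * c + a * d * ∫ ω, Y ω ∂μ + b * c * ∫ ω, X ω ∂μ + b * d * ∫ ω, X ω * Y ω ∂μ := by
    rw [integral_add, integral_add, integral_add, integral_const, integral_const_mul,
      integral_const_mul, integral_const_mul]
    · simp
    all_goals fun_prop
  rw [← ENNReal.toReal_eq_toReal_iff' (by finiteness) (by finiteness), ENNReal.toReal_mul,
    ← measureReal_def, hinter, ← measureReal_def, ← measureReal_def,
    measureReal_preimage_of_sign hXm hX hs hab, measureReal_preimage_of_sign hYm hY ht hcd,
    hexpand, h]
  ring

lemma ae_sign_of_measure_eq_half (hXm : Measurable X) (h1 : μ {ω | X ω = 1} = 1 / 2)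
    (h2 : μ {ω | X ω = -1} = 1 / 2) : ∀ᵐ ω ∂μ, X ω = 1 ∨ X ω = -1 := by
  have hdisj : Disjoint {ω | X ω = 1} {ω | X ω = -1} :=
    Set.disjoint_left.2 fun ω (h : X ω = 1) (h' : X ω = -1) => by linarith
  have hunion : μ ({ω | X ω = 1} ∪ {ω | X ω = -1}) = 1 := by
    rw [measure_union hdisj (hXm (measurableSet_singleton _)), h1, h2, ENNReal.add_halves]
  exact mem_ae_iff.2 ((prob_compl_eq_zero_iff
    ((hXm (measurableSet_singleton _)).union (hXm (measurableSet_singleton _)))).2 hunion)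

lemma integral_eq_zero_of_measure_eq_half (hXm : Measurable X) (h1 : μ {ω | X ω = 1} = 1 / 2)
    (h2 : μ {ω | X ω = -1} = 1 / 2) : ∫ ω, X ω ∂μ = 0 := by
  have key := measureReal_preimage_of_sign hXm (ae_sign_of_measure_eq_half hXm h1 h2)
    (measurableSet_singleton (1 : ℝ)) (a := 1 / 2) (b := 1 / 2)
    (by rintro x (rfl | rfl) <;> norm_num)
  rw [measureReal_def] at key
  change (μ {ω | X ω = 1}).toReal = _ at key
  rw [h1] at key
  norm_num at key
  linarith

end Sign

section Rademacher

variable {Ω ι : Type*} [MeasurableSpace Ω] {μ : Measure Ω} {ε : ι → Ω → ℝ}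

lemma integral_mul_eq_zero_of_ne (hmeas : ∀ n, Measurable (ε n)) (hindep : iIndepFun ε μ)
    (hmean : ∀ n, ∫ ω, ε n ω ∂μ = 0) {p q : ι} (hpq : p ≠ q) :
    ∫ ω, ε p ω * ε q ω ∂μ = 0 := by
  rw [(hindep.indepFun hpq).integral_fun_mul_eq_mul_integral (hmeas p).aestronglyMeasurable
    (hmeas q).aestronglyMeasurable, hmean p, zero_mul]

/-- Unlike in `iIndepFun.indepFun_mul_mul`, the two products share the factor `ε q`. -/
lemma indepFun_mul_mul_of_sign [IsProbabilityMeasure μ] (hmeas : ∀ n, Measurable (ε n))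
    (hindep : iIndepFun ε μ)
    (hsign : ∀ n, ∀ᵐ ω ∂μ, ε n ω = 1 ∨ ε n ω = -1) (hmean : ∀ n, ∫ ω, ε n ω ∂μ = 0)
    {p q r : ι} (hpq : p ≠ q) (hpr : p ≠ r) :
    IndepFun (ε p * ε q) (ε q * ε r) μ := by
  refine indepFun_of_sign ((hmeas p).mul (hmeas q)) ((hmeas q).mul (hmeas r))
    (ae_sign_mul (hsign p) (hsign q)) (ae_sign_mul (hsign q) (hsign r)) ?_
  have hsq : (fun ω => (ε p * ε q) ω * (ε q * ε r) ω) =ᵐ[μ] fun ω => ε p ω * ε r ω := by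
    filter_upwards [hsign q] with ω hq
    rcases hq with hq | hq <;> simp [hq]
  simp only [Pi.mul_apply] at hsq ⊢
  rw [integral_congr_ae hsq, integral_mul_eq_zero_of_ne hmeas hindep hmean hpr,
    integral_mul_eq_zero_of_ne hmeas hindep hmean hpq, zero_mul]

end Rademacher

lemma Filter.Tendsto.of_comp_two_mul_of_comp_two_mul_add_one {α : Type*} [TopologicalSpace α]
    {u : ℕ → α} {L : α} (h₀ : Tendsto (fun n => u (2 * n)) atTop (𝓝 L))
    (h₁ : Tendsto (fun n => u (2 * n + 1)) atTop (𝓝 L)) : Tendsto u atTop (𝓝 L) := by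
  intro s hs
  obtain ⟨a, ha⟩ := eventually_atTop.1 (h₀ hs)
  obtain ⟨b, hb⟩ := eventually_atTop.1 (h₁ hs)
  refine eventually_atTop.2 ⟨2 * (a + b), fun n hn => ?_⟩
  obtain ⟨k, rfl | rfl⟩ := Nat.even_or_odd' n
  · exact ha k (by omega)
  · exact hb k (by omega)

lemma Finset.sum_range_two_mul {M : Type*} [AddCommMonoid M] (g : ℕ → M) (K : ℕ) :
    ∑ n ∈ range (2 * K), g n = ∑ k ∈ range K, (g (2 * k) + g (2 * k + 1)) := by
  induction K with
  | zero => simp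
  | succ K ih => rw [mul_add, mul_one, sum_range_succ, sum_range_succ, ih, sum_range_succ,
      add_assoc]

lemma tendsto_avg_of_tendsto_avg_pairs {g : ℕ → ℝ} {C ℓ : ℝ} (hg : ∀ n, |g n| ≤ C)
    (h : Tendsto (fun K : ℕ => (∑ k ∈ range K, (g (2 * k) + g (2 * k + 1))) / K) atTop (𝓝 ℓ)) :
    Tendsto (fun K : ℕ => (∑ n ∈ range K, g n) / K) atTop (𝓝 (ℓ / 2)) := by
  have heven : Tendsto (fun K : ℕ => (∑ n ∈ range (2 * K), g n) / (2 * K : ℕ)) atTop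
      (𝓝 (ℓ / 2)) := by
    refine (h.div_const 2).congr fun K => ?_
    rw [sum_range_two_mul]
    push_cast
    ring
  have hratio : Tendsto (fun K : ℕ => (2 * K : ℝ) / (2 * K + 1)) atTop (𝓝 1) := by
    simpa using (tendsto_natCast_div_add_atTop (1 / 2 : ℝ)).congr fun K => by
      field_simp
  have hlast : Tendsto (fun K : ℕ => g (2 * K) / (2 * K + 1)) atTop (𝓝 0) := by
    refine squeeze_zero_norm (fun K => ?_)
      (by simpa using (tendsto_one_div_add_atTop_nhds_zero_nat (𝕜 := ℝ)).const_mul C)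
    rw [norm_div, Real.norm_of_nonneg (by positivity : (0 : ℝ) ≤ 2 * K + 1), Real.norm_eq_abs,
      ← div_eq_mul_inv]
    have hC : 0 ≤ C := (abs_nonneg _).trans (hg 0)
    gcongr
    · exact hg _
    · linarith
  refine Tendsto.of_comp_two_mul_of_comp_two_mul_add_one heven ?_
  have hodd := (heven.mul hratio).add hlast
  rw [mul_one, add_zero] at hodd
  refine hodd.congr' (eventually_atTop.2 ⟨1, fun K hK => ?_⟩)
  have hK : (K : ℝ) ≠ 0 := by positivity
  simp only [sum_range_succ]
  push_cast
  field_simp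

lemma Finset.sum_Icc_neg_natCast {M : Type*} [AddCommMonoid M] (f : ℤ → M) (N : ℕ) :
    ∑ n ∈ Icc (-(N : ℤ)) N, f n = ∑ k ∈ range (N + 1), f k + ∑ k ∈ range N, f (-1 - k) := by
  induction N with
  | zero => simp
  | succ N ih =>
    have hIcc : Icc (-((N + 1 : ℕ) : ℤ)) (N + 1 : ℕ)
        = insert (-1 - (N : ℤ)) (insert ((N : ℤ) + 1) (Icc (-(N : ℤ)) N)) := by
      ext x
      simp only [mem_Icc, mem_insert]
      omega
    rw [hIcc, sum_insert (by simp only [mem_insert, mem_Icc]; omega),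
      sum_insert (by simp only [mem_Icc]; omega), ih, sum_range_succ (fun k : ℕ => f k) (N + 1),
      sum_range_succ (fun k : ℕ => f (-1 - k)) N]
    push_cast
    abel

def HasCesaroMean (f : ℤ → ℝ) (L : ℝ) : Prop :=
  Tendsto (fun K : ℕ => (∑ k ∈ range K, f k) / K) atTop (𝓝 L) ∧
    Tendsto (fun K : ℕ => (∑ k ∈ range K, f (-1 - k)) / K) atTop (𝓝 L)

namespace HasCesaroMean

variable {f g : ℤ → ℝ} {L M : ℝ}

lemma const (c : ℝ) : HasCesaroMean (fun _ => c) c := by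
  have h : Tendsto (fun K : ℕ => (∑ _k ∈ range K, c) / K) atTop (𝓝 c) := by
    refine tendsto_const_nhds.congr' (eventually_atTop.2 ⟨1, fun K hK => ?_⟩)
    have hK : (K : ℝ) ≠ 0 := by positivity
    simp [hK]
  exact ⟨h, h⟩

lemma add (hf : HasCesaroMean f L) (hg : HasCesaroMean g M) :
    HasCesaroMean (fun k => f k + g k) (L + M) := by
  constructor <;> simp only [sum_add_distrib, add_div]
  exacts [hf.1.add hg.1, hf.2.add hg.2]

lemma neg (hf : HasCesaroMean f L) : HasCesaroMean (fun k => -f k) (-L) := by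
  constructor <;> simp only [sum_neg_distrib, neg_div]
  exacts [hf.1.neg, hf.2.neg]

lemma of_pairs {C : ℝ} (hbound : ∀ n, |f n| ≤ C)
    (hf : HasCesaroMean (fun k => f (2 * k) + f (2 * k + 1)) L) : HasCesaroMean f (L / 2) := by
  constructor
  · refine tendsto_avg_of_tendsto_avg_pairs (g := fun n : ℕ => f n) (fun n => hbound n) ?_
    simpa only [Nat.cast_mul, Nat.cast_add, Nat.cast_ofNat, Nat.cast_one] using hf.1
  · refine tendsto_avg_of_tendsto_avg_pairs (g := fun n : ℕ => f (-1 - n)) (fun n => hbound _) ?_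
    refine hf.2.congr fun K => ?_
    congr 1
    refine sum_congr rfl fun k _ => ?_
    push_cast
    rw [add_comm]
    ring_nf

lemma tendsto_sum_Icc (hf : HasCesaroMean f L) :
    Tendsto (fun N : ℕ => (∑ n ∈ Icc (-(N : ℤ)) N, f n) / (2 * N + 1)) atTop (𝓝 L) := by
  have hw₁ : Tendsto (fun N : ℕ => ((N + 1 : ℕ) : ℝ) / (2 * N + 1)) atTop (𝓝 (1 / 2)) := by
    simpa [add_comm] using tendsto_add_mul_div_add_mul_atTop_nhds (1 : ℝ) 1 1 two_ne_zero
  have hw₂ : Tendsto (fun N : ℕ => (N : ℝ) / (2 * N + 1)) atTop (𝓝 (1 / 2)) := by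
    simpa [add_comm] using tendsto_add_mul_div_add_mul_atTop_nhds (0 : ℝ) 1 1 two_ne_zero
  have hlim := (hw₁.mul ((tendsto_add_atTop_iff_nat 1).2 hf.1)).add (hw₂.mul hf.2)
  rw [← add_mul, add_halves, one_mul] at hlim
  refine hlim.congr' (eventually_atTop.2 ⟨1, fun N hN => ?_⟩)
  have hN : (N : ℝ) ≠ 0 := by positivity
  simp only [sum_Icc_neg_natCast]
  push_cast
  field_simp

end HasCesaroMean

section Shift

variable {Ω : Type*} [MeasurableSpace Ω] {μ : Measure Ω} [IsProbabilityMeasure μ]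
  {ε : ℤ → Ω → ℝ}

lemma ae_tendsto_avg_mul_shift (hmeas : ∀ n, Measurable (ε n)) (hindep : iIndepFun ε μ)
    (hsign : ∀ n, ∀ᵐ ω ∂μ, ε n ω = 1 ∨ ε n ω = -1) (hmean : ∀ n, ∫ ω, ε n ω ∂μ = 0)
    {a : ℕ → ℤ} (ha : Function.Injective a) {e : ℤ} (he : e ≠ 0) :
    ∀ᵐ ω ∂μ, Tendsto (fun K : ℕ => (∑ i ∈ range K, ε (a i) ω * ε (a i + e) ω) / K)
      atTop (𝓝 0) := by
  set X : ℕ → Ω → ℝ := fun i => ε (a i) * ε (a i + e)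
  have hne : ∀ i, a i ≠ a i + e := fun i => by omega
  have hXm : ∀ i, Measurable (X i) := fun i => (hmeas _).mul (hmeas _)
  have hXsign : ∀ i, ∀ᵐ ω ∂μ, X i ω = 1 ∨ X i ω = -1 :=
    fun i => ae_sign_mul (hsign _) (hsign _)
  have hXmean : ∀ i, ∫ ω, X i ω ∂μ = 0 :=
    fun i => integral_mul_eq_zero_of_ne hmeas hindep hmean (hne i)
  have hXindep : Pairwise fun i j => IndepFun (X i) (X j) μ := by
    intro i j hij
    have ha_ne := ha.ne hij
    by_cases hji : a j = a i + e
    · have := indepFun_mul_mul_of_sign hmeas hindep hsign hmean (hne i)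
        (r := a j + e) (by omega)
      simpa only [X, hji] using this
    by_cases hij_shift : a i = a j + e
    · have := indepFun_mul_mul_of_sign hmeas hindep hsign hmean (hne j)
        (r := a i + e) (by omega)
      simpa only [X, hij_shift] using this.symm
    exact hindep.indepFun_mul_mul hmeas _ _ _ _ ha_ne (by omega) (by omega) (by omega)
  have hident : ∀ i, IdentDistrib (X i) (X 0) μ μ := fun i =>
    identDistrib_of_sign (hXm i) (hXm 0) (hXsign i) (hXsign 0) (by rw [hXmean, hXmean])
  have := strong_law_ae_real X (integrable_of_sign (hXm 0) (hXsign 0)) hXindep hident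
  rwa [hXmean 0] at this

lemma ae_hasCesaroMean_mul_shift (hmeas : ∀ n, Measurable (ε n)) (hindep : iIndepFun ε μ)
    (hsign : ∀ n, ∀ᵐ ω ∂μ, ε n ω = 1 ∨ ε n ω = -1) (hmean : ∀ n, ∫ ω, ε n ω ∂μ = 0) (e : ℤ) :
    ∀ᵐ ω ∂μ, HasCesaroMean (fun k => ε k ω * ε (k + e) ω) (if e = 0 then 1 else 0) := by
  split_ifs with he
  · filter_upwards [ae_all_iff.2 hsign] with ω hω
    convert HasCesaroMean.const 1 with k
    rcases hω k with h | h <;> simp [he, h]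
  · filter_upwards [ae_tendsto_avg_mul_shift hmeas hindep hsign hmean Nat.cast_injective he,
      ae_tendsto_avg_mul_shift hmeas hindep hsign hmean (a := fun i : ℕ => -1 - (i : ℤ))
        (fun i j h => by simpa using h) he] with ω hpos hneg
    exact ⟨hpos, hneg⟩

end Shift

section Dimer

variable {Ω : Type*} {ε : ℤ → Ω → ℝ} {ω : Ω}

lemma dimerSeq_two_mul (k : ℤ) : dimerSeq ε ω (2 * k) = ε k ω := by
  simp [dimerSeq]

lemma dimerSeq_two_mul_add_one (k : ℤ) : dimerSeq ε ω (2 * k + 1) = -ε k ω := by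
  simp [dimerSeq]

lemma dimerSeq_pair_mul_shift_two_mul (k d : ℤ) :
    dimerSeq ε ω (2 * k) * dimerSeq ε ω (2 * k + 2 * d)
      + dimerSeq ε ω (2 * k + 1) * dimerSeq ε ω (2 * k + 1 + 2 * d)
      = ε k ω * ε (k + d) ω + ε k ω * ε (k + d) ω := by
  rw [show 2 * k + 2 * d = 2 * (k + d) by ring, show 2 * k + 1 + 2 * d = 2 * (k + d) + 1 by ring,
    dimerSeq_two_mul, dimerSeq_two_mul, dimerSeq_two_mul_add_one, dimerSeq_two_mul_add_one,
    neg_mul_neg]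

lemma dimerSeq_pair_mul_shift_two_mul_add_one (k d : ℤ) :
    dimerSeq ε ω (2 * k) * dimerSeq ε ω (2 * k + (2 * d + 1))
      + dimerSeq ε ω (2 * k + 1) * dimerSeq ε ω (2 * k + 1 + (2 * d + 1))
      = -(ε k ω * ε (k + d) ω) + -(ε k ω * ε (k + (d + 1)) ω) := by
  rw [show 2 * k + (2 * d + 1) = 2 * (k + d) + 1 by ring,
    show 2 * k + 1 + (2 * d + 1) = 2 * (k + (d + 1)) by ring, dimerSeq_two_mul,
    dimerSeq_two_mul, dimerSeq_two_mul_add_one, dimerSeq_two_mul_add_one, mul_neg, neg_mul]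

lemma tendsto_sum_Icc_dimerSeq_mul_shift (hω : ∀ n, ε n ω = 1 ∨ ε n ω = -1) {m : ℤ} {L : ℝ}
    (h : HasCesaroMean (fun k => dimerSeq ε ω (2 * k) * dimerSeq ε ω (2 * k + m)
      + dimerSeq ε ω (2 * k + 1) * dimerSeq ε ω (2 * k + 1 + m)) L) :
    Tendsto (fun N : ℕ => (∑ n ∈ Icc (-(N : ℤ)) N, dimerSeq ε ω n * dimerSeq ε ω (n + m))
      / (2 * N + 1)) atTop (𝓝 (L / 2)) := by
  have habs : ∀ n, |dimerSeq ε ω n| = 1 := fun n => by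
    obtain ⟨k, rfl | rfl⟩ := Int.even_or_odd' n
    · rcases hω k with h | h <;> simp [dimerSeq_two_mul, h]
    · rcases hω k with h | h <;> simp [dimerSeq_two_mul_add_one, h]
  refine (HasCesaroMean.of_pairs (f := fun n => dimerSeq ε ω n * dimerSeq ε ω (n + m)) (C := 1)
    (fun n => ?_) h).tendsto_sum_Icc
  rw [abs_mul, habs, habs, one_mul]

end Dimer

/-- Almost surely, the autocorrelation coefficients of the close-packed dimer
system exist and equal `η(0)=1`, `η(±1)=-1/2`, `η(m)=0` for `|m| ≥ 2`. -/
theorem dimer_autocorrelation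
    {Ω : Type*} [MeasurableSpace Ω] (μ : Measure Ω) [IsProbabilityMeasure μ]
    (ε : ℤ → Ω → ℝ) (hmeas : ∀ n, Measurable (ε n))
    (hindep : iIndepFun ε μ)
    (hone : ∀ n, μ {ω | ε n ω = 1} = 1 / 2)
    (hmone : ∀ n, μ {ω | ε n ω = -1} = 1 / 2) :
    ∀ m : ℤ, ∀ᵐ ω ∂μ, Tendsto
      (fun N : ℕ => (∑ n ∈ Finset.Icc (-(N : ℤ)) N,
        dimerSeq ε ω n * dimerSeq ε ω (n + m)) / (2 * N + 1))
      atTop (nhds (if m = 0 then 1 else if m = 1 ∨ m = -1 then -(1 / 2) else 0)) := by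
  intro m
  have hsign n := ae_sign_of_measure_eq_half (hmeas n) (hone n) (hmone n)
  have hmean n := integral_eq_zero_of_measure_eq_half (hmeas n) (hone n) (hmone n)
  have hshift := ae_hasCesaroMean_mul_shift hmeas hindep hsign hmean
  obtain ⟨d, rfl | rfl⟩ := Int.even_or_odd' m
  · filter_upwards [ae_all_iff.2 hsign, hshift d] with ω hω hd
    have hpairs := hd.add hd
    simp_rw [← dimerSeq_pair_mul_shift_two_mul] at hpairs
    convert tendsto_sum_Icc_dimerSeq_mul_shift hω hpairs using 2
    split_ifs <;> first | omega | norm_num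
  · filter_upwards [ae_all_iff.2 hsign, hshift d, hshift (d + 1)] with ω hω hd hd'
    have hpairs := hd.neg.add hd'.neg
    simp_rw [← dimerSeq_pair_mul_shift_two_mul_add_one] at hpairs
    convert tendsto_sum_Icc_dimerSeq_mul_shift hω hpairs using 2
    split_ifs <;> first | omega | norm_num
end

section
/- The number of patterns of the Ledrappier subshift 𝕏_L on the square block {0,…,N−1}² is exactly 2^{2N−1}; in particular the patch count grows exponentially in N (the perimeter) but subexponentially in N² (the area), so the topological entropy of 𝕏_L with respect to ℤ²-translations is zero while the entropy along rank-1 subactions is positive. -/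
open Filter

/-- The Ledrappier subshift, with `±1` realised as `ℤˣ`. -/
def ledrappier : Set ((ℤ × ℤ) → ℤˣ) :=
  {w | ∀ x : ℤ × ℤ, w x * w (x + (1, 0)) * w (x + (0, 1)) = 1}

/-- The set of legal patterns of the Ledrappier subshift on the block
`{0,…,N-1}²`. -/
def ledrappierPatterns (N : ℕ) : Set (Fin N × Fin N → ℤˣ) :=
  {f | ∃ w ∈ ledrappier, ∀ p : Fin N × Fin N, f p = w ((p.1 : ℤ), (p.2 : ℤ))}

namespace LedrappierAux

lemma units_eq_of_mul_eq_one {u v : ℤˣ} (h : u * v = 1) : u = v := by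
  rcases Int.units_eq_one_or u with h1 | h1 <;> rcases Int.units_eq_one_or v with h2 | h2 <;>
    simp_all

/-- One step of the Ledrappier recursion on rows. -/
def up (r : ℤ → ℤˣ) : ℤ → ℤˣ := fun x => r x * r (x + 1)

/-- A row whose `up` is the given row. -/
def down (r : ℤ → ℤˣ) : ℤ → ℤˣ := fun x =>
  if 0 ≤ x then ∏ k ∈ Finset.range x.toNat, r k
  else ∏ k ∈ Finset.range (-x).toNat, r (x + k)

lemma down_succ (r : ℤ → ℤˣ) (x : ℤ) : down r (x + 1) = down r x * r x := by
  rcases le_or_gt 0 x with h | h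
  · rw [down, if_pos (by omega), down, if_pos h]
    have hx : (x + 1).toNat = x.toNat + 1 := by omega
    rw [hx, Finset.prod_range_succ, Int.toNat_of_nonneg h]
  · rcases eq_or_lt_of_le (by omega : x + 1 ≤ 0) with h1 | h1
    · have hx : x = -1 := by omega
      rw [h1, hx]
      rw [down, if_pos le_rfl, down, if_neg (by omega)]
      simp only [Int.toNat_zero, Finset.range_zero, Finset.prod_empty, neg_neg,
        Int.toNat_one, Finset.prod_range_one, Nat.cast_zero, add_zero]
      exact (Int.units_mul_self _).symm
    · rw [down, if_neg (by omega), down, if_neg (by omega)]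
      have hm : (-x).toNat = (-(x + 1)).toNat + 1 := by omega
      rw [hm, Finset.prod_range_succ']
      have he : ∀ k ∈ Finset.range (-(x + 1)).toNat,
          r (x + (((k : ℕ) + 1 : ℕ) : ℤ)) = r (x + 1 + (k : ℤ)) := by
        intro k _
        congr 1
        push_cast
        ring
      rw [Finset.prod_congr rfl he]
      simp only [Nat.cast_zero, add_zero]
      rw [mul_assoc, Int.units_mul_self, mul_one]

lemma up_down (r : ℤ → ℤˣ) : up (down r) = r := by
  funext x
  rw [up, down_succ, ← mul_assoc, Int.units_mul_self, one_mul]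

/-- The row at height `y` generated from the row `r` at height `0`. -/
def row (r : ℤ → ℤˣ) (y : ℤ) : ℤ → ℤˣ :=
  if 0 ≤ y then up^[y.toNat] r else down^[(-y).toNat] r

lemma row_natCast (r : ℤ → ℤˣ) (n : ℕ) : row r n = up^[n] r := by
  rw [row, if_pos (by positivity), Int.toNat_natCast]

lemma row_succ (r : ℤ → ℤˣ) (y : ℤ) : row r (y + 1) = up (row r y) := by
  rcases le_or_gt 0 y with h | h
  · rw [row, if_pos (by omega), row, if_pos h]
    have hx : (y + 1).toNat = y.toNat + 1 := by omega
    rw [hx, Function.iterate_succ_apply']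
  · rcases eq_or_lt_of_le (by omega : y + 1 ≤ 0) with h1 | h1
    · have hy : y = -1 := by omega
      subst hy
      show row r 0 = up (row r (-1))
      rw [row, if_pos le_rfl, row, if_neg (by omega)]
      simp [up_down]
    · rw [row, if_neg (by omega), row, if_neg (by omega)]
      have hm : (-y).toNat = (-(y + 1)).toNat + 1 := by omega
      rw [hm, Function.iterate_succ_apply', up_down]

/-- The configuration generated by a row. -/
def wOf (r : ℤ → ℤˣ) : (ℤ × ℤ) → ℤˣ := fun q => row r q.2 q.1

lemma wOf_mem (r : ℤ → ℤˣ) : wOf r ∈ ledrappier := by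
  intro q
  obtain ⟨a, b⟩ := q
  have h1 : (a, b) + ((1 : ℤ), (0 : ℤ)) = (a + 1, b) := by simp
  have h2 : (a, b) + ((0 : ℤ), (1 : ℤ)) = (a, b + 1) := by simp
  simp only [wOf, h1, h2]
  rw [row_succ]
  simp only [up]
  exact Int.units_mul_self _

/-- Key triangularity lemma: if two rows agree on `[x, x+n)`, then the values of their
`n`-fold `up`-iterates at `x` differ exactly by the values at `x+n`. -/
lemma key (n : ℕ) : ∀ (r r' : ℤ → ℤˣ) (x : ℤ),
    (∀ k : ℕ, k < n → r (x + k) = r' (x + k)) →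
    up^[n] r x * up^[n] r' x = r (x + n) * r' (x + n) := by
  induction n with
  | zero => intro r r' x _; simp
  | succ n ih =>
    intro r r' x h
    rw [Function.iterate_succ_apply, Function.iterate_succ_apply]
    have h' : ∀ k : ℕ, k < n → up r (x + k) = up r' (x + k) := by
      intro k hk
      have e1 := h k (by omega)
      have e2 := h (k + 1) (by omega)
      rw [up, up, e1]
      congr 1
      rw [show x + (k : ℤ) + 1 = x + ((k : ℕ) + 1 : ℕ) by push_cast; ring] at *
      exact e2
    rw [ih (up r) (up r') x h']
    have e := h n (by omega)
    rw [up, up, e, show (((n : ℕ) + 1 : ℕ) : ℤ) = (n : ℤ) + 1 by push_cast; ring,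
      ← add_assoc]
    rw [mul_mul_mul_comm, Int.units_mul_self, one_mul]

/-- A row supported on `[0, 2N-1)`, given by `v` there and `1` elsewhere. -/
def emb (N : ℕ) (v : Fin (2 * N - 1) → ℤˣ) : ℤ → ℤˣ := fun z =>
  if h : 0 ≤ z ∧ z < ((2 * N - 1 : ℕ) : ℤ) then v ⟨z.toNat, by omega⟩ else 1

lemma wOf_natCast (r : ℤ → ℤˣ) (x y : ℕ) :
    wOf r ((x : ℤ), (y : ℤ)) = up^[y] r x := by
  simp [wOf, row_natCast]

lemma psi_inj (N : ℕ) (hN : 1 ≤ N) :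
    Function.Injective (fun v : Fin (2 * N - 1) → ℤˣ =>
      (fun p : Fin N × Fin N => wOf (emb N v) ((p.1 : ℤ), (p.2 : ℤ)))) := by
  intro v v' hvv
  have main : ∀ z : ℕ, z < 2 * N - 1 → emb N v z = emb N v' z := by
    intro z
    induction z using Nat.strong_induction_on with
    | _ z ih =>
      intro hz
      by_cases hzN : z < N
      · have hp := congrFun hvv (⟨z, hzN⟩, ⟨0, by omega⟩)
        have hp' : up^[0] (emb N v) (z : ℤ) = up^[0] (emb N v') (z : ℤ) := by
          rw [← wOf_natCast, ← wOf_natCast]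
          exact hp
        simpa using hp'
      · set y : ℕ := z - (N - 1) with hy
        have hy1 : 1 ≤ y := by omega
        have hyN : y < N := by omega
        have hp := congrFun hvv (⟨N - 1, by omega⟩, ⟨y, hyN⟩)
        have hp' : up^[y] (emb N v) ((N - 1 : ℕ) : ℤ) = up^[y] (emb N v') ((N - 1 : ℕ) : ℤ) := by
          rw [← wOf_natCast, ← wOf_natCast]
          exact hp
        have hk : ∀ k : ℕ, k < y →
            emb N v (((N - 1 : ℕ) : ℤ) + (k : ℤ)) = emb N v' (((N - 1 : ℕ) : ℤ) + (k : ℤ)) := by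
          intro k hky
          rw [← Nat.cast_add]
          exact ih ((N - 1) + k) (by omega) (by omega)
        have hkey := key y (emb N v) (emb N v') ((N - 1 : ℕ) : ℤ) hk
        rw [hp', Int.units_mul_self] at hkey
        have hzz : ((N - 1 : ℕ) : ℤ) + ((y : ℕ) : ℤ) = ((z : ℕ) : ℤ) := by
          rw [← Nat.cast_add]
          congr 1
          omega
        rw [hzz] at hkey
        exact units_eq_of_mul_eq_one hkey.symm
  funext i
  have h := main i.1 i.2
  have hcond : 0 ≤ ((i.1 : ℕ) : ℤ) ∧ ((i.1 : ℕ) : ℤ) < ((2 * N - 1 : ℕ) : ℤ) :=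
    ⟨by positivity, by exact_mod_cast i.2⟩
  simp only [emb] at h
  rw [dif_pos hcond, dif_pos hcond] at h
  have hfin : (⟨((i.1 : ℕ) : ℤ).toNat, by omega⟩ : Fin (2 * N - 1)) = i := by
    ext
    simp
  rwa [hfin] at h

lemma led_step {w : (ℤ × ℤ) → ℤˣ} (hw : w ∈ ledrappier) (a b : ℤ) :
    w (a, b + 1) = w (a, b) * w (a + 1, b) := by
  have h := hw (a, b)
  have h1 : (a, b) + ((1 : ℤ), (0 : ℤ)) = (a + 1, b) := by simp
  have h2 : (a, b) + ((0 : ℤ), (1 : ℤ)) = (a, b + 1) := by simp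
  rw [h1, h2] at h
  exact (units_eq_of_mul_eq_one h).symm

lemma pattern_eq (N : ℕ) (hN : 1 ≤ N) {f g : Fin N × Fin N → ℤˣ}
    (hf : f ∈ ledrappierPatterns N) (hg : g ∈ ledrappierPatterns N)
    (hb : ∀ i : Fin N, f (i, ⟨0, by omega⟩) = g (i, ⟨0, by omega⟩))
    (hc : ∀ j : ℕ, (hj : j + 1 < N) →
      f (⟨N - 1, by omega⟩, ⟨j + 1, hj⟩) = g (⟨N - 1, by omega⟩, ⟨j + 1, hj⟩)) :
    f = g := by
  obtain ⟨w, hw, hwf⟩ := hf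
  obtain ⟨w', hw', hwg⟩ := hg
  have main : ∀ y : ℕ, y < N → ∀ x : ℕ, x < N →
      w ((x : ℤ), (y : ℤ)) = w' ((x : ℤ), (y : ℤ)) := by
    intro y
    induction y with
    | zero =>
      intro _ x hx
      have h1 := hwf (⟨x, hx⟩, ⟨0, by omega⟩)
      have h2 := hwg (⟨x, hx⟩, ⟨0, by omega⟩)
      have h3 := hb ⟨x, hx⟩
      exact h1.symm.trans (h3.trans h2)
    | succ y ih =>
      intro hy x hx
      by_cases hxe : x = N - 1
      · subst hxe
        have h1 := hwf (⟨N - 1, hx⟩, ⟨y + 1, hy⟩)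
        have h2 := hwg (⟨N - 1, hx⟩, ⟨y + 1, hy⟩)
        have h3 := hc y hy
        exact h1.symm.trans (h3.trans h2)
      · have hx1 : x + 1 < N := by omega
        have e := led_step hw (x : ℤ) (y : ℤ)
        have e' := led_step hw' (x : ℤ) (y : ℤ)
        have c1 := ih (by omega) x (by omega)
        have c2 := ih (by omega) (x + 1) (by omega)
        have hcast : ((y + 1 : ℕ) : ℤ) = (y : ℤ) + 1 := by push_cast; ring
        rw [hcast, e, e', c1, show ((x : ℤ) + 1) = ((x + 1 : ℕ) : ℤ) by push_cast; ring, c2]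
  funext p
  exact (hwf p).trans ((main p.2.1 p.2.isLt p.1.1 p.1.isLt).trans (hwg p).symm)

lemma card_units_int : Fintype.card ℤˣ = 2 := by decide

end LedrappierAux

open LedrappierAux in
/-- The number of Ledrappier patterns on an `N × N` block is exactly
`2^(2N-1)`; consequently the pattern counts grow subexponentially in the area
`N²` (zero topological entropy for the `ℤ²`-action) but exponentially in the
side length `N` (positive entropy of rank 1). -/
theorem ledrappier_pattern_count :
    (∀ N : ℕ, 1 ≤ N → Set.ncard (ledrappierPatterns N) = 2 ^ (2 * N - 1)) ∧
    Tendsto (fun N : ℕ => Real.log (Set.ncard (ledrappierPatterns N)) / (N : ℝ) ^ 2)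
      atTop (nhds 0) ∧
    ∃ c > (0 : ℝ), Tendsto
      (fun N : ℕ => Real.log (Set.ncard (ledrappierPatterns N)) / (N : ℝ))
      atTop (nhds c) := by
  have part1 : ∀ N : ℕ, 1 ≤ N → Set.ncard (ledrappierPatterns N) = 2 ^ (2 * N - 1) := by
    intro N hN
    have hfin : (ledrappierPatterns N).Finite := Set.toFinite _
    have hψmem : ∀ v : Fin (2 * N - 1) → ℤˣ,
        (fun p : Fin N × Fin N => wOf (emb N v) ((p.1 : ℤ), (p.2 : ℤ))) ∈ ledrappierPatterns N :=
      fun v => ⟨wOf (emb N v), wOf_mem _, fun p => rfl⟩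
    have hlow : (Set.univ : Set (Fin (2 * N - 1) → ℤˣ)).ncard ≤ (ledrappierPatterns N).ncard :=
      Set.ncard_le_ncard_of_injOn _ (fun v _ => hψmem v) ((psi_inj N hN).injOn) hfin
    have hup : (ledrappierPatterns N).ncard ≤
        (Set.univ : Set ((Fin N → ℤˣ) × (Fin (N - 1) → ℤˣ))).ncard := by
      apply Set.ncard_le_ncard_of_injOn
        (fun f => (fun i : Fin N => f (i, ⟨0, by omega⟩),
          fun j : Fin (N - 1) => f (⟨N - 1, by omega⟩, ⟨j.1 + 1, by omega⟩)))
      · intro f _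
        trivial
      · intro f hf g hg hfg
        apply pattern_eq N hN hf hg
        · intro i
          exact congrFun (congrArg Prod.fst hfg) i
        · intro j hj
          exact congrFun (congrArg Prod.snd hfg) ⟨j, by omega⟩
    rw [Set.ncard_univ] at hlow hup
    have c1 : Nat.card (Fin (2 * N - 1) → ℤˣ) = 2 ^ (2 * N - 1) := by
      rw [Nat.card_eq_fintype_card, Fintype.card_fun, card_units_int, Fintype.card_fin]
    have c2 : Nat.card ((Fin N → ℤˣ) × (Fin (N - 1) → ℤˣ)) = 2 ^ (2 * N - 1) := by
      rw [Nat.card_eq_fintype_card, Fintype.card_prod, Fintype.card_fun, Fintype.card_fun,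
        card_units_int, Fintype.card_fin, Fintype.card_fin, ← pow_add]
      congr 1
      omega
    rw [c1] at hlow
    rw [c2] at hup
    exact le_antisymm hup hlow
  have hlog : ∀ N : ℕ, 1 ≤ N →
      Real.log (Set.ncard (ledrappierPatterns N)) = (2 * (N : ℝ) - 1) * Real.log 2 := by
    intro N hN
    rw [part1 N hN]
    rw [Nat.cast_pow, Nat.cast_ofNat, Real.log_pow]
    congr 1
    rw [Nat.cast_sub (by omega : 1 ≤ 2 * N)]
    push_cast
    ring
  have t1 : Tendsto (fun N : ℕ => (2 - 1 / (N : ℝ)) * Real.log 2) atTop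
      (nhds ((2 - 0) * Real.log 2)) :=
    (tendsto_const_nhds.sub tendsto_one_div_atTop_nhds_zero_nat).mul_const _
  refine ⟨part1, ?_, ?_⟩
  · have t2 : Tendsto (fun N : ℕ => ((2 - 1 / (N : ℝ)) * Real.log 2) * (1 / (N : ℝ))) atTop
        (nhds (((2 - 0) * Real.log 2) * 0)) := t1.mul tendsto_one_div_atTop_nhds_zero_nat
    rw [mul_zero] at t2
    apply t2.congr'
    filter_upwards [eventually_ge_atTop 1] with N hN
    have hN0 : (N : ℝ) ≠ 0 := Nat.cast_ne_zero.mpr (by omega)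
    rw [hlog N hN, sq]
    field_simp
  · refine ⟨2 * Real.log 2, by positivity, ?_⟩
    have t1' : Tendsto (fun N : ℕ => (2 - 1 / (N : ℝ)) * Real.log 2) atTop
        (nhds (2 * Real.log 2)) := by simpa using t1
    apply t1'.congr'
    filter_upwards [eventually_ge_atTop 1] with N hN
    have hN0 : (N : ℝ) ≠ 0 := Nat.cast_ne_zero.mpr (by omega)
    rw [hlog N hN]
    field_simp
end
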